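/- With the reflection extension â(t,x) = a(φ(t), Φ(x)) of a function a on P = (0,1)^{d+1}, for every parabolic box Q = (s,s+ρ²) × C with ρ ≤ 1, there exists a parabolic box Q̂ = (t₀ - ρ²/2, t₀ + ρ²/2) × Ĉ contained in [0,1]^{d+1} of the same scale ρ such that ∫_{Q^z}∫_C∫_C |â(t,x) - â(t,y)| dx dy dt ≤ 2^{2d+1} ∫_{Q̂^z}∫_{Ĉ}∫_{Ĉ} |a(t,x) - a(t,y)| dx dy dt. -/

import Mathlib

/-
On every interval `[n, n + 1]`, `n ∈ ℤ`, the tent map `φ` is an isometry `e` of `ℝ` onto `[0, 1]`,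
and on `[n + 1, n + 2]` it is `e` composed with the reflection in `n + 1`. So on an interval of
length `L ≤ 1` starting in `[n, n + 1)`, `φ` has two measure-preserving branches, and both send
their piece into one interval of length `L` inside `[0, 1]`. Taking products, the map
`(t, x, y) ↦ (φ t, Φ x, Φ y)` on `Q × C × C` has `2 · 2^d · 2^d` measure-preserving branches into
`Q̂ × Ĉ × Ĉ`; changing variables on each branch bounds the integral of `|a(t, x) - a(t, y)|`.
-/

open MeasureTheory Set

/-- The open cube of side `ρ` based at `c` in `ℝ^d`. -/
def cube (d : ℕ) (c : Fin d → ℝ) (ρ : ℝ) : Set (Fin d → ℝ) :=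
  Set.univ.pi fun i => Set.Ioo (c i) (c i + ρ)

/-- The unit parabolic box `P = (0,1)^{d+1}`. -/
def unitBox (d : ℕ) : Set (ℝ × (Fin d → ℝ)) :=
  Set.Ioo (0:ℝ) 1 ×ˢ cube d (fun _ => 0) 1

theorem MeasureTheory.Measure.ae_le_set_prod {α β : Type*} [MeasurableSpace α]
    [MeasurableSpace β] {μ : Measure α} {ν : Measure β} [SFinite ν] {s s' : Set α} {t t' : Set β} (hs : s ≤ᵐ[μ] s')
    (ht : t ≤ᵐ[ν] t') : s ×ˢ t ≤ᵐ[μ.prod ν] s' ×ˢ t' := by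
  rw [ae_le_set] at hs ht ⊢
  rw [prod_sdiff_prod]
  exact measure_union_null (by simp [Measure.prod_prod, ht]) (by simp [Measure.prod_prod, hs])

structure PiecewiseMeasurePreserving (ι : Type*) {α β : Type*} [MeasurableSpace α]
    [MeasurableSpace β] (f : α → β) (μ : Measure α) (ν : Measure β) (s : Set α) (t : Set β) where
  piece : ι → Set α
  branch : ι → α ≃ᵐ β
  measurableSet_piece : ∀ i, MeasurableSet (piece i)
  ae_le_iUnion_piece : s ≤ᵐ[μ] ⋃ i, piece i
  measurePreserving_branch : ∀ i, MeasurePreserving (branch i) μ ν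
  eqOn_branch : ∀ i, EqOn f (branch i) (piece i)
  mapsTo_branch : ∀ i, MapsTo (branch i) (piece i) t

namespace PiecewiseMeasurePreserving

variable {ι α β : Type*} [MeasurableSpace α] [MeasurableSpace β] {f : α → β} {μ : Measure α}
  {ν : Measure β} {s : Set α} {t : Set β}

theorem integrableOn_comp_piece (h : PiecewiseMeasurePreserving ι f μ ν s t) {g : β → ℝ}
    (hg : IntegrableOn g t ν) (i : ι) : IntegrableOn (fun x => g (f x)) (h.piece i) μ := by
  have hg' : IntegrableOn (g ∘ h.branch i) (h.piece i) μ :=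
    ((h.measurePreserving_branch i).integrableOn_image (h.branch i).measurableEmbedding).1
      (hg.mono_set (h.mapsTo_branch i).image_subset)
  exact hg'.congr_fun (fun x hx => congrArg g (h.eqOn_branch i hx).symm) (h.measurableSet_piece i)

theorem setIntegral_comp_piece_le (h : PiecewiseMeasurePreserving ι f μ ν s t) {g : β → ℝ}
    (hg₀ : 0 ≤ g) (hg : IntegrableOn g t ν) (i : ι) :
    ∫ x in h.piece i, g (f x) ∂μ ≤ ∫ y in t, g y ∂ν :=
  calc ∫ x in h.piece i, g (f x) ∂μ = ∫ x in h.piece i, g (h.branch i x) ∂μ :=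
        setIntegral_congr_fun (h.measurableSet_piece i) fun _ hx => congrArg g (h.eqOn_branch i hx)
    _ = ∫ y in h.branch i '' h.piece i, g y ∂ν :=
        ((h.measurePreserving_branch i).setIntegral_image_emb
          (h.branch i).measurableEmbedding _ _).symm
    _ ≤ ∫ y in t, g y ∂ν :=
        setIntegral_mono_set hg (ae_of_all _ fun y => hg₀ y)
          (h.mapsTo_branch i).image_subset.eventuallyLE

variable [Fintype ι]

theorem integrableOn_comp (h : PiecewiseMeasurePreserving ι f μ ν s t) {g : β → ℝ}
    (hg : IntegrableOn g t ν) : IntegrableOn (fun x => g (f x)) s μ :=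
  (integrableOn_finite_iUnion.2 (h.integrableOn_comp_piece hg)).mono_set_ae h.ae_le_iUnion_piece

theorem setIntegral_comp_le (h : PiecewiseMeasurePreserving ι f μ ν s t) {g : β → ℝ}
    (hg₀ : 0 ≤ g) (hg : IntegrableOn g t ν) :
    ∫ x in s, g (f x) ∂μ ≤ Fintype.card ι * ∫ y in t, g y ∂ν := by
  have hint : ∀ i ∈ Finset.univ, Integrable (fun x => g (f x)) (μ.restrict (h.piece i)) :=
    fun i _ => h.integrableOn_comp_piece hg i
  calc ∫ x in s, g (f x) ∂μ ≤ ∫ x in ⋃ i, h.piece i, g (f x) ∂μ :=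
        setIntegral_mono_set (integrableOn_finite_iUnion.2 (h.integrableOn_comp_piece hg))
          (ae_of_all _ fun _ => hg₀ _) h.ae_le_iUnion_piece
    _ ≤ ∫ x, g (f x) ∂(∑ i, μ.restrict (h.piece i)) := by
        refine integral_mono_measure ?_ (ae_of_all _ fun _ => hg₀ _)
          (integrable_finsetSum_measure.2 hint)
        exact Measure.sum_fintype (fun i => μ.restrict (h.piece i)) ▸ Measure.restrict_iUnion_le
    _ = ∑ i, ∫ x in h.piece i, g (f x) ∂μ := integral_finsetSum_measure hint
    _ ≤ ∑ _i : ι, ∫ y in t, g y ∂ν :=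
        Finset.sum_le_sum fun i _ => h.setIntegral_comp_piece_le hg₀ hg i
    _ = Fintype.card ι * ∫ y in t, g y ∂ν := by
        rw [Finset.sum_const, Finset.card_univ, nsmul_eq_mul]

variable {ι' γ δ : Type*} [MeasurableSpace γ] [MeasurableSpace δ] {f' : γ → δ} {μ' : Measure γ}
  {ν' : Measure δ} {s' : Set γ} {t' : Set δ}

def prod [SFinite μ] [SFinite μ'] (h : PiecewiseMeasurePreserving ι f μ ν s t)
    (h' : PiecewiseMeasurePreserving ι' f' μ' ν' s' t') :
    PiecewiseMeasurePreserving (ι × ι') (Prod.map f f') (μ.prod μ') (ν.prod ν') (s ×ˢ s')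
      (t ×ˢ t') where
  piece k := h.piece k.1 ×ˢ h'.piece k.2
  branch k := (h.branch k.1).prodCongr (h'.branch k.2)
  measurableSet_piece k := (h.measurableSet_piece k.1).prod (h'.measurableSet_piece k.2)
  ae_le_iUnion_piece := by
    rw [iUnion_prod]
    exact Measure.ae_le_set_prod h.ae_le_iUnion_piece h'.ae_le_iUnion_piece
  measurePreserving_branch k :=
    (h.measurePreserving_branch k.1).prod (h'.measurePreserving_branch k.2)
  eqOn_branch k _ hz := Prod.ext (h.eqOn_branch k.1 hz.1) (h'.eqOn_branch k.2 hz.2)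
  mapsTo_branch k := (h.mapsTo_branch k.1).prodMap (h'.mapsTo_branch k.2)

end PiecewiseMeasurePreserving

def PiecewiseMeasurePreserving.pi {ι : Type*} [Fintype ι] {κ α β : ι → Type*}
    [∀ i, MeasurableSpace (α i)] [∀ i, MeasurableSpace (β i)] {f : ∀ i, α i → β i}
    {μ : ∀ i, Measure (α i)} {ν : ∀ i, Measure (β i)} [∀ i, SigmaFinite (μ i)]
    [∀ i, SigmaFinite (ν i)] {s : ∀ i, Set (α i)} {t : ∀ i, Set (β i)}
    (h : ∀ i, PiecewiseMeasurePreserving (κ i) (f i) (μ i) (ν i) (s i) (t i)) :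
    PiecewiseMeasurePreserving (∀ i, κ i) (fun x i => f i (x i)) (Measure.pi μ) (Measure.pi ν)
      (univ.pi s) (univ.pi t) where
  piece k := univ.pi fun i => (h i).piece (k i)
  branch k := MeasurableEquiv.piCongrRight fun i => (h i).branch (k i)
  measurableSet_piece k := MeasurableSet.univ_pi fun i => (h i).measurableSet_piece (k i)
  ae_le_iUnion_piece := by
    rw [iUnion_univ_pi]
    exact Measure.ae_le_set_pi fun i _ => (h i).ae_le_iUnion_piece
  measurePreserving_branch k :=
    measurePreserving_pi μ ν fun i => (h i).measurePreserving_branch (k i)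
  eqOn_branch k _ hx := funext fun i => (h i).eqOn_branch (k i) (hx i trivial)
  mapsTo_branch k _ hx i _ := (h i).mapsTo_branch (k i) (hx i trivial)

def PiecewiseMeasurePreserving.ofSplit {α β : Type*} [MeasurableSpace α] [LinearOrder α]
    [TopologicalSpace α] [OrderClosedTopology α] [OpensMeasurableSpace α] [MeasurableSpace β]
    {f : α → β} {μ : Measure α} [NullSingletonClass μ] {ν : Measure β} {s : Set α} {t : Set β}
    (hs : MeasurableSet s) (p : α) (e₁ e₂ : α ≃ᵐ β) (he₁ : MeasurePreserving e₁ μ ν)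
    (he₂ : MeasurePreserving e₂ μ ν) (hf₁ : EqOn f e₁ (s ∩ Iio p)) (hf₂ : EqOn f e₂ (s ∩ Ioi p))
    (ht₁ : MapsTo e₁ (s ∩ Iio p) t) (ht₂ : MapsTo e₂ (s ∩ Ioi p) t) :
    PiecewiseMeasurePreserving Bool f μ ν s t where
  piece b := s ∩ cond b (Ioi p) (Iio p)
  branch b := cond b e₂ e₁
  measurableSet_piece := Bool.forall_bool.2 ⟨hs.inter measurableSet_Iio, hs.inter measurableSet_Ioi⟩
  ae_le_iUnion_piece := by
    rw [ae_le_set]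
    refine measure_mono_null (fun x hx => ?_) (measure_singleton p)
    simp only [mem_sdiff, mem_iUnion, Bool.exists_bool, cond_true, cond_false, mem_inter_iff,
      mem_Ioi, mem_Iio] at hx
    exact le_antisymm (not_lt.1 fun h => hx.2 (Or.inr ⟨hx.1, h⟩))
      (not_lt.1 fun h => hx.2 (Or.inl ⟨hx.1, h⟩))
  measurePreserving_branch := Bool.forall_bool.2 ⟨he₁, he₂⟩
  eqOn_branch := Bool.forall_bool.2 ⟨hf₁, hf₂⟩
  mapsTo_branch := Bool.forall_bool.2 ⟨ht₁, ht₂⟩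

structure IsTentMap (φ : ℝ → ℝ) : Prop where
  eq_self : ∀ t ∈ Icc (0 : ℝ) 1, φ t = t
  eq_two_sub : ∀ t ∈ Icc (1 : ℝ) 2, φ t = 2 - t
  periodic : Function.Periodic φ 2

theorem IsometryEquiv.measurePreserving_real (e : ℝ ≃ᵢ ℝ) : MeasurePreserving e := by
  simpa only [hausdorffMeasure_real] using e.measurePreserving_hausdorffMeasure 1

namespace IsTentMap

variable {φ : ℝ → ℝ}

theorem apply_eq_sub_two_mul (hφ : IsTentMap φ) (k : ℤ) {t : ℝ} (h₀ : 2 * k ≤ t)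
    (h₁ : t ≤ 2 * k + 1) : φ t = t - 2 * k := by
  rw [← hφ.periodic.sub_int_mul_eq k, hφ.eq_self _ ⟨by linarith, by linarith⟩]
  ring

theorem apply_eq_two_mul_add_two_sub (hφ : IsTentMap φ) (k : ℤ) {t : ℝ} (h₀ : 2 * k + 1 ≤ t)
    (h₁ : t ≤ 2 * k + 2) : φ t = 2 * k + 2 - t := by
  rw [← hφ.periodic.sub_int_mul_eq k, hφ.eq_two_sub _ ⟨by linarith, by linarith⟩]
  ring

theorem exists_isometryEquiv_eqOn (hφ : IsTentMap φ) (n : ℤ) :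
    ∃ e : ℝ ≃ᵢ ℝ, MapsTo e (Icc n (n + 1)) (Icc 0 1) ∧
      ∀ t ∈ Icc (n : ℝ) (n + 1), φ t = e t ∧ φ (2 * (n + 1) - t) = e t := by
  obtain ⟨k, rfl | rfl⟩ := Int.even_or_odd' n
  · refine ⟨IsometryEquiv.subRight (2 * k), fun t ⟨h₀, h₁⟩ => ?_, fun t ⟨h₀, h₁⟩ => ?_⟩ <;>
      push_cast at h₀ h₁ ⊢
    · constructor <;> simp only [IsometryEquiv.subRight_apply] <;> linarith
    · rw [IsometryEquiv.subRight_apply, hφ.apply_eq_sub_two_mul k h₀ h₁,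
        hφ.apply_eq_two_mul_add_two_sub k (by linarith) (by linarith)]
      constructor <;> ring
  · refine ⟨IsometryEquiv.subLeft (2 * k + 2), fun t ⟨h₀, h₁⟩ => ?_, fun t ⟨h₀, h₁⟩ => ?_⟩ <;>
      push_cast at h₀ h₁ ⊢
    · constructor <;> simp only [IsometryEquiv.subLeft_apply] <;> linarith
    · rw [IsometryEquiv.subLeft_apply, hφ.apply_eq_two_mul_add_two_sub k h₀ (by linarith),
        hφ.apply_eq_sub_two_mul (k + 1) (by push_cast; linarith) (by push_cast; linarith)]
      push_cast
      constructor <;> ring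

theorem exists_piecewiseMeasurePreserving (hφ : IsTentMap φ) (s : ℝ) {L : ℝ} (hL : L ≤ 1) :
    ∃ m, Ioo m (m + L) ⊆ Icc 0 1 ∧ Nonempty
      (PiecewiseMeasurePreserving Bool φ volume volume (Ioo s (s + L)) (Ioo m (m + L))) := by
  obtain ⟨e, he, hφe⟩ := hφ.exists_isometryEquiv_eqOn ⌊s⌋
  set n : ℝ := (⌊s⌋ : ℝ)
  have hn : n ≤ s := Int.floor_le s
  have hs : s < n + 1 := Int.lt_floor_add_one s
  set q := min s (n + 1 - L)
  have hq : Ioo q (q + L) ⊆ Icc n (n + 1) :=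
    Ioo_subset_Icc_self.trans (Icc_subset_Icc (le_min hn (by linarith))
      (by linarith [min_le_right s (n + 1 - L)]))
  have hqL : q + L = min (s + L) (n + 1) := by
    simp only [q, ← min_add_add_right, sub_add_cancel]
  have hball (x : ℝ) : Ioo x (x + L) = Metric.ball (x + L / 2) (L / 2) := by
    rw [Real.ball_eq_Ioo]
    congr 1 <;> ring
  have himage : e '' Ioo q (q + L) = Ioo (e (q + L / 2) - L / 2) (e (q + L / 2) - L / 2 + L) := by
    rw [hball, hball, e.image_ball, sub_add_cancel]
  -- The part of `(s, s + L)` left of `n + 1` lies in `(q, q + L)`, the part right of it is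
  -- reflected into `(q, q + L)` in `n + 1`.
  refine ⟨e (q + L / 2) - L / 2, himage ▸ (image_mono hq).trans he.image_subset, ⟨?_⟩⟩
  rw [← himage]
  refine .ofSplit measurableSet_Ioo (n + 1) e.toHomeomorph.toMeasurableEquiv
    ((IsometryEquiv.subLeft (2 * (n + 1))).trans e).toHomeomorph.toMeasurableEquiv
    e.measurePreserving_real (IsometryEquiv.measurePreserving_real _) ?_ ?_ ?_ ?_
  · exact fun x hx => (hφe x ⟨hn.trans hx.1.1.le, hx.2.le⟩).1
  · intro x hx
    have h := (hφe (2 * (n + 1) - x) ⟨by linarith [hx.1.2], by linarith [hx.2.out]⟩).2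
    rwa [sub_sub_cancel] at h
  · exact fun x hx => mem_image_of_mem e
      ⟨(min_le_left _ _).trans_lt hx.1.1, hqL ▸ lt_min hx.1.2 hx.2⟩
  · intro x hx
    have hx' : 2 * (n + 1) - x ∈ Ioo q (q + L) :=
      ⟨(min_le_right _ _).trans_lt (by linarith [hx.1.2]),
        hqL ▸ lt_min (by linarith [hx.1.2, hx.2.out]) (by linarith [hx.2.out])⟩
    exact mem_image_of_mem e hx'

end IsTentMap

section Oscillation

variable {α β : Type*} [MeasurableSpace α] [MeasurableSpace β] {μ : Measure α} {ν : Measure β}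
  [SFinite μ] [SFinite ν]

def spaceOscillation (a : α × β → ℝ) (z : α × β × β) : ℝ := |a (z.1, z.2.1) - a (z.1, z.2.2)|

theorem IntegrableOn.spaceOscillation {a : α × β → ℝ} {s : Set α} {t : Set β}
    (ha : IntegrableOn a (s ×ˢ t) (μ.prod ν)) (ht : ν t ≠ ⊤) :
    IntegrableOn (spaceOscillation a) (s ×ˢ t ×ˢ t) (μ.prod (ν.prod ν)) := by
  have : IsFiniteMeasure (ν.restrict t) := isFiniteMeasure_restrict.2 ht
  rw [IntegrableOn, ← Measure.prod_restrict] at ha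
  rw [IntegrableOn, ← Measure.prod_restrict, ← Measure.prod_restrict]
  have hfst : Integrable (fun z : α × β × β => a (z.1, z.2.1))
      ((μ.restrict s).prod ((ν.restrict t).prod (ν.restrict t))) :=
    ((measurePreserving_prodAssoc _ _ _).integrable_comp_emb
      MeasurableEquiv.prodAssoc.measurableEmbedding).1 (ha.comp_fst _)
  have hsnd : Integrable (fun z : α × β × β => a (z.1, z.2.2))
      ((μ.restrict s).prod ((ν.restrict t).prod (ν.restrict t))) :=
    ((MeasurePreserving.id _).prod Measure.measurePreserving_swap).integrable_comp_of_integrable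
      hfst
  exact (hfst.sub hsnd).abs

end Oscillation

theorem setIntegral_prod_prod {α β γ E : Type*} [MeasurableSpace α] [MeasurableSpace β]
    [MeasurableSpace γ] [NormedAddCommGroup E] [NormedSpace ℝ E] {μ : Measure α} {ν : Measure β}
    {κ : Measure γ} [SFinite μ] [SFinite ν] [SFinite κ] {g : α × β × γ → E} {s : Set α}
    {t : Set β} {u : Set γ} (hg : IntegrableOn g (s ×ˢ t ×ˢ u) (μ.prod (ν.prod κ))) :
    ∫ z in s ×ˢ t ×ˢ u, g z ∂μ.prod (ν.prod κ) =
      ∫ x in s, ∫ y in t, ∫ z in u, g (x, y, z) ∂κ ∂ν ∂μ := by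
  rw [IntegrableOn, ← Measure.prod_restrict, ← Measure.prod_restrict] at hg
  rw [← Measure.prod_restrict, ← Measure.prod_restrict, integral_prod _ hg]
  refine integral_congr_ae ?_
  filter_upwards [hg.prod_right_ae] with x hx
  exact integral_prod _ hx

/-- For every parabolic box of scale `ρ ≤ 1`, the oscillation integral of the reflection
extension `â` is controlled, up to the multiplicity factor `2^{2d+1}`, by the oscillation
integral of `a` over a parabolic box of the same scale contained in `[0,1]^{d+1}`. -/
theorem reflection_oscillation_bound (d : ℕ) (φ : ℝ → ℝ)
    (h1 : ∀ t ∈ Set.Icc (0:ℝ) 1, φ t = t)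
    (h2 : ∀ t ∈ Set.Icc (1:ℝ) 2, φ t = 2 - t)
    (h3 : ∀ t : ℝ, φ (t + 2) = φ t)
    (a : ℝ × (Fin d → ℝ) → ℝ) (ha : IntegrableOn a (unitBox d))
    (ρ : ℝ) (hρ0 : 0 < ρ) (hρ : ρ ≤ 1) (s : ℝ) (c : Fin d → ℝ) :
    ∃ t₀ : ℝ, ∃ c₁ : Fin d → ℝ,
      Set.Ioo (t₀ - ρ ^ 2 / 2) (t₀ + ρ ^ 2 / 2) ⊆ Set.Icc (0:ℝ) 1 ∧
      (∀ i, Set.Ioo (c₁ i) (c₁ i + ρ) ⊆ Set.Icc (0:ℝ) 1) ∧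
      (∫ t in Set.Ioo s (s + ρ ^ 2), ∫ x in cube d c ρ, ∫ y in cube d c ρ,
          |a (φ t, fun i => φ (x i)) - a (φ t, fun i => φ (y i))|)
        ≤ 2 ^ (2 * d + 1) *
          ∫ t in Set.Ioo (t₀ - ρ ^ 2 / 2) (t₀ + ρ ^ 2 / 2),
            ∫ x in cube d c₁ ρ, ∫ y in cube d c₁ ρ, |a (t, x) - a (t, y)| := by
  have hφ : IsTentMap φ := ⟨h1, h2, h3⟩
  obtain ⟨m, hm, ⟨hT⟩⟩ := hφ.exists_piecewiseMeasurePreserving s (pow_le_one₀ hρ0.le hρ)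
  choose c₁ hc₁ hX using fun i : Fin d => hφ.exists_piecewiseMeasurePreserving (c i) hρ
  have hΦ : PiecewiseMeasurePreserving (Fin d → Bool) (fun x i => φ (x i)) volume volume
      (cube d c ρ) (cube d c₁ ρ) := .pi fun i => (hX i).some
  have hΨ := hT.prod (hΦ.prod hΦ)
  have hIoo {x y : ℝ} (h : Ioo x y ⊆ Icc 0 1) : Ioo x y ⊆ Ioo 0 1 :=
    (interior_maximal h isOpen_Ioo).trans_eq interior_Icc
  have hbox : Ioo m (m + ρ ^ 2) ×ˢ cube d c₁ ρ ⊆ unitBox d :=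
    prod_mono (hIoo hm) (pi_mono fun i _ => by simpa using hIoo (hc₁ i))
  have hcube : volume (cube d c₁ ρ) ≠ ⊤ := by
    simp [cube, volume_pi_pi, Real.volume_Ioo]
  have hosc := IntegrableOn.spaceOscillation (μ := volume) (ν := volume) (ha.mono_set hbox) hcube
  refine ⟨m + ρ ^ 2 / 2, c₁, by rwa [add_sub_cancel_right, add_assoc, add_halves], hc₁, ?_⟩
  rw [add_sub_cancel_right, add_assoc, add_halves]
  calc _ = _ := (setIntegral_prod_prod (hΨ.integrableOn_comp hosc)).symm
    _ ≤ _ := hΨ.setIntegral_comp_le (fun _ => abs_nonneg _) hosc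
    _ = _ := by
      rw [setIntegral_prod_prod hosc]
      simp only [Fintype.card_prod, Fintype.card_fun, Fintype.card_bool, Fintype.card_fin,
        spaceOscillation]
      push_cast
      ring
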